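/- Fix θ ∈ (1,2], let p_1 be the bounded continuous density of the stable law with Laplace transform exp(λ^θ), with bounded derivative, and set q_s(x) = x s^{−1−1/θ} p_1(−x s^{−1/θ}). Let (B_n) satisfy B_n = h(n)n^{1/θ} with h slowly varying. Then for every α > 0, sup_{1 ≤ j ≤ αB_n} | ∑_{k=n}^∞ (j/(k B_k)) p_1(−j/B_k) − ∫_1^∞ q_s(j/B_n) ds | → 0 as n → ∞. -/

import Mathlib

/-!
Put `x = j / B n`. The `k`-th term of the series equals
`(1/n) · x (n/k) (B n / B k) · p₁(-x · B n / B k)`, and replacing `B n / B k` by `(n/k)^(1/θ)`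
turns it into `(1/n) · q_{k/n}(x)`, a Riemann cell of mesh `1/n` for `∫ q_s(x) ds`. Regular
variation gives `B n / B k → (n/k)^(1/θ)` uniformly on `n ≤ k ≤ K n` (a monotone sandwich on a
finite grid), so since `p₁` is bounded and Lipschitz, the `K n` cells contribute `O(ε + 1/n)`. The
parts `k ≥ K n` and `s ≥ K` are small uniformly in `n` once `K` is large: the first by the Potter
bound `B n / B k ≤ 2^γ (n/k)^γ` for some `0 < γ < 1/θ`, the second as `q_s(x) = O(s^(-1-1/θ))`.
-/

open Filter MeasureTheory

/-- A positive measurable function is slowly varying if it is eventually positive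
and h(tx)/h(x) → 1 as x → ∞ for all t > 0. -/
def SlowlyVarying (h : ℝ → ℝ) : Prop :=
  (∀ᶠ x in atTop, 0 < h x) ∧
    ∀ t : ℝ, 0 < t → Tendsto (fun x => h (t * x) / h x) atTop (nhds 1)

open Topology

/-! ### Power functions -/

lemma abs_rpow_neg_sub_rpow_neg_le {r s t : ℝ} (hr : 0 ≤ r) (hs : 1 ≤ s) (ht : 1 ≤ t) :
    |s ^ (-r) - t ^ (-r)| ≤ r * |s - t| := by
  have hderiv : ∀ u ∈ Set.Ici (1 : ℝ),
      HasDerivWithinAt (fun u : ℝ => u ^ (-r)) (-r * u ^ (-r - 1)) (Set.Ici 1) u :=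
    fun u hu => (Real.hasDerivAt_rpow_const (Or.inl (by linarith [hu.out]))).hasDerivWithinAt
  have hbound : ∀ u ∈ Set.Ici (1 : ℝ), ‖-r * u ^ (-r - 1)‖ ≤ r := fun u hu => by
    have hu : (1 : ℝ) ≤ u := hu
    rw [Real.norm_eq_abs, abs_mul, abs_neg, abs_of_nonneg hr,
      abs_of_nonneg (Real.rpow_nonneg (by linarith) _)]
    exact mul_le_of_le_one_right hr (Real.rpow_le_one_of_one_le_of_nonpos hu (by linarith))
  simpa only [Real.norm_eq_abs] using
    (convex_Ici 1).norm_image_sub_le_of_norm_hasDerivWithin_le hderiv hbound ht hs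

lemma rpow_div_sub_rpow_div_le {c p q : ℝ} (hc0 : 0 ≤ c) (hc1 : c ≤ 1) (hq : 1 ≤ q)
    (hqp : q ≤ p) : ((q + 1) / p) ^ c - (q / (p + 1)) ^ c ≤ (2 / q) ^ c := by
  have hp : 0 < p := by linarith
  have hgap_nonneg : 0 ≤ (q + 1) / p - q / (p + 1) := by
    rw [sub_nonneg, div_le_div_iff₀ (by linarith) hp]; nlinarith
  have hgap : (q + 1) / p - q / (p + 1) ≤ 2 / q := by
    rw [div_sub_div _ _ hp.ne' (by linarith), div_le_div_iff₀ (by positivity) (by linarith)]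
    nlinarith
  have hsub := Real.rpow_add_le_add_rpow (by positivity : 0 ≤ q / (p + 1)) hgap_nonneg hc0 hc1
  rw [add_sub_cancel] at hsub
  linarith [Real.rpow_le_rpow hgap_nonneg hgap hc0]

lemma summable_rpow_nat_add {γ : ℝ} (hγ : 0 < γ) (m : ℕ) :
    Summable fun i : ℕ => ((m + i : ℕ) : ℝ) ^ (-1 - γ) := by
  simpa only [add_comm m] using
    (summable_nat_add_iff m).mpr (Real.summable_nat_rpow.mpr (by linarith))

lemma tsum_rpow_nat_add_le {γ : ℝ} (hγ : 0 < γ) {m : ℕ} (hm : 1 ≤ m) :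
    ∑' i : ℕ, ((m + i : ℕ) : ℝ) ^ (-1 - γ) ≤ (1 + 1 / γ) * (m : ℝ) ^ (-γ) := by
  have hm' : (1 : ℝ) ≤ m := by exact_mod_cast hm
  have hsum := summable_rpow_nat_add hγ m
  have hanti : AntitoneOn (fun t : ℝ => t ^ (-1 - γ)) (Set.Ici m) := fun s hs t _ hst =>
    Real.rpow_le_rpow_of_nonpos (by linarith [hs.out]) hst (by linarith)
  have hpartial : ∀ N : ℕ, ∑ i ∈ Finset.range N, ((m + (i + 1) : ℕ) : ℝ) ^ (-1 - γ)
      ≤ (m : ℝ) ^ (-γ) / γ := fun N => by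
    have hint : ∫ t in (m : ℝ)..m + N, t ^ (-1 - γ)
        = ((m : ℝ) ^ (-γ) - (m + N) ^ (-γ)) / γ := by
      rw [integral_rpow (Or.inr ⟨by linarith, fun h => by
        rcases Set.mem_uIcc.mp h with h | h <;> linarith [h.1, N.cast_nonneg (α := ℝ)]⟩)]
      rw [show -1 - γ + 1 = -γ by ring, div_neg, ← neg_div, neg_sub]
    calc ∑ i ∈ Finset.range N, ((m + (i + 1) : ℕ) : ℝ) ^ (-1 - γ)
        ≤ ∫ t in (m : ℝ)..m + N, t ^ (-1 - γ) := by
          simpa only [Nat.cast_add] using (hanti.mono Set.Icc_subset_Ici_self).sum_le_integral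
      _ ≤ (m : ℝ) ^ (-γ) / γ := by
          rw [hint]
          gcongr
          linarith [Real.rpow_nonneg (by positivity : (0 : ℝ) ≤ m + N) (-γ)]
  rw [hsum.tsum_eq_zero_add]
  have hfirst : ((m + 0 : ℕ) : ℝ) ^ (-1 - γ) ≤ (m : ℝ) ^ (-γ) :=
    Real.rpow_le_rpow_of_exponent_le hm' (by linarith)
  have htail := ((summable_nat_add_iff 1).mpr hsum).tsum_le_of_sum_range_le hpartial
  rw [add_mul, one_mul, one_div, ← div_eq_inv_mul]
  exact add_le_add hfirst htail

lemma summable_nat_add_of_abs_le_rpow {f : ℕ → ℝ} {A γ : ℝ} (hγ : 0 < γ) {m : ℕ}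
    (hf : ∀ k, m ≤ k → |f k| ≤ A * (k : ℝ) ^ (-1 - γ)) : Summable fun i => f (m + i) :=
  ((summable_rpow_nat_add hγ m).mul_left A).of_norm_bounded fun i => by
    simpa only [Real.norm_eq_abs] using hf (m + i) (Nat.le_add_right m i)

lemma abs_tsum_nat_add_le_of_abs_le_rpow {f : ℕ → ℝ} {A γ : ℝ} (hγ : 0 < γ) {m : ℕ}
    (hm : 1 ≤ m) (hf : ∀ k, m ≤ k → |f k| ≤ A * (k : ℝ) ^ (-1 - γ)) :
    |∑' i, f (m + i)| ≤ A * ((1 + 1 / γ) * (m : ℝ) ^ (-γ)) := by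
  have hA : 0 ≤ A := nonneg_of_mul_nonneg_left ((abs_nonneg _).trans (hf m le_rfl))
    (Real.rpow_pos_of_pos (by exact_mod_cast hm) _)
  rw [← Real.norm_eq_abs]
  refine (tsum_of_norm_bounded (f := fun i => f (m + i))
    ((summable_rpow_nat_add hγ m).mul_left A).hasSum
    fun i => hf (m + i) (Nat.le_add_right m i)).trans ?_
  rw [tsum_mul_left]
  exact mul_le_mul_of_nonneg_left (tsum_rpow_nat_add_le hγ hm) hA

lemma abs_tsum_mul_add_le_of_abs_le_rpow {f : ℕ → ℝ} {A γ : ℝ} (hγ : 0 < γ) {n m : ℕ}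
    (hn : 1 ≤ n) (hm : 1 ≤ m) (hf : ∀ k, n ≤ k → |f k| ≤ A * (n : ℝ) ^ γ * (k : ℝ) ^ (-1 - γ)) :
    |∑' i, f (m * n + i)| ≤ A * (1 + 1 / γ) * (m : ℝ) ^ (-γ) := by
  have hn' : (0 : ℝ) < n := by exact_mod_cast hn
  refine (abs_tsum_nat_add_le_of_abs_le_rpow hγ (Nat.one_le_iff_ne_zero.mpr (by positivity))
    fun k hk => hf k (le_trans (Nat.le_mul_of_pos_left n hm) hk)).trans_eq ?_
  have hcancel : (n : ℝ) ^ γ * (n : ℝ) ^ (-γ) = 1 := by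
    rw [← Real.rpow_add hn', add_neg_cancel, Real.rpow_zero]
  rw [Nat.cast_mul, Real.mul_rpow (by positivity) hn'.le]
  linear_combination (A * (1 + 1 / γ) * (m : ℝ) ^ (-γ)) * hcancel

/-! ### Riemann sums -/

lemma tsum_subtype_le_eq_tsum_add {M : Type*} [AddCommMonoid M] [TopologicalSpace M]
    (f : ℕ → M) (n : ℕ) : ∑' k : {k : ℕ // n ≤ k}, f k = ∑' i : ℕ, f (n + i) :=
  (Equiv.tsum_eq ⟨fun i => ⟨n + i, Nat.le_add_right n i⟩, fun k => k.1 - n,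
    fun i => by simp, fun k => Subtype.ext (Nat.add_sub_cancel' k.2)⟩ (fun k => f k)).symm

lemma abs_sum_sub_integral_le_of_cells {g : ℝ → ℝ} {F : ℕ → ℝ} {a δ E : ℝ} {N : ℕ}
    (hg : ∀ i < N, IntervalIntegrable g volume (a + i * δ) (a + i * δ + δ))
    (hcell : ∀ i < N, |F i - ∫ s in (a + i * δ)..(a + i * δ + δ), g s| ≤ E) :
    |∑ i ∈ Finset.range N, F i - ∫ s in a..a + N * δ, g s| ≤ N * E := by
  have hnext : ∀ i : ℕ, a + ((i + 1 : ℕ) : ℝ) * δ = a + i * δ + δ := fun i => by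
    push_cast; ring
  have hsum := intervalIntegral.sum_integral_adjacent_intervals (a := fun i : ℕ => a + i * δ)
    (f := g) (μ := volume) (n := N) fun i hi => by simpa only [hnext] using hg i hi
  simp only [hnext, Nat.cast_zero, zero_mul, add_zero] at hsum
  rw [← hsum, ← Finset.sum_sub_distrib]
  refine (Finset.abs_sum_le_sum_abs _ _).trans ?_
  simpa using Finset.sum_le_card_nsmul _ _ E fun i hi => hcell i (Finset.mem_range.mp hi)

lemma abs_tsum_sub_integral_Ioi_le {F : ℕ → ℝ} {g : ℝ → ℝ} (hF : Summable F) {a b : ℝ}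
    (hab : a ≤ b) (hg : IntegrableOn g (Set.Ioi a)) (N : ℕ) :
    |∑' i, F i - ∫ s in Set.Ioi a, g s|
      ≤ |∑ i ∈ Finset.range N, F i - ∫ s in a..b, g s| + |∑' i, F (i + N)|
        + |∫ s in Set.Ioi b, g s| := by
  have hint : ∫ s in Set.Ioi a, g s = (∫ s in a..b, g s) + ∫ s in Set.Ioi b, g s := by
    rw [intervalIntegral.integral_of_le hab, ← Set.Ioc_union_Ioi_eq_Ioi hab]
    exact setIntegral_union (Set.Ioc_disjoint_Ioi le_rfl) measurableSet_Ioi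
      (hg.mono_set Set.Ioc_subset_Ioi_self) (hg.mono_set (Set.Ioi_subset_Ioi hab))
  rw [← hF.sum_add_tsum_nat_add N, hint]
  calc |∑ i ∈ Finset.range N, F i + ∑' i, F (i + N)
        - ((∫ s in a..b, g s) + ∫ s in Set.Ioi b, g s)|
      = |(∑ i ∈ Finset.range N, F i - ∫ s in a..b, g s) + ∑' i, F (i + N)
          - ∫ s in Set.Ioi b, g s| := by congr 1; ring
    _ ≤ _ := (abs_sub _ _).trans (add_le_add_left (abs_add_le _ _) _)

/-! ### The kernel `q_s(x)` -/

/-- `stableKernel p (1 / θ) x s` is `q_s(x)`. -/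
noncomputable def stableKernel (p : ℝ → ℝ) (c x s : ℝ) : ℝ :=
  x * s ^ (-1 - c) * p (-x * s ^ (-c))

section Kernel

variable {p : ℝ → ℝ} {M c x : ℝ}

lemma abs_stableKernel_le (hp : ∀ t, |p t| ≤ M) {s : ℝ} (hs : 0 ≤ s) :
    |stableKernel p c x s| ≤ |x| * M * s ^ (-1 - c) := by
  rw [stableKernel, abs_mul, abs_mul, abs_of_nonneg (Real.rpow_nonneg hs _), mul_right_comm]
  gcongr
  exact hp _

lemma continuousOn_stableKernel (hp_cont : Continuous p) :
    ContinuousOn (stableKernel p c x) (Set.Ioi 0) := fun s (hs : 0 < s) =>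
  ((continuousAt_const.mul (continuousAt_id.rpow_const (Or.inl hs.ne'))).mul
    (hp_cont.continuousAt.comp (continuousAt_const.mul
      (continuousAt_id.rpow_const (Or.inl hs.ne'))))).continuousWithinAt

lemma intervalIntegrable_stableKernel (hp_cont : Continuous p) {a b : ℝ} (ha : 0 < a)
    (hb : 0 < b) : IntervalIntegrable (stableKernel p c x) volume a b :=
  ((continuousOn_stableKernel hp_cont).mono fun _ hs =>
    (lt_min ha hb).trans_le hs.1).intervalIntegrable

lemma integrableOn_stableKernel_Ioi (hp_cont : Continuous p) (hp : ∀ t, |p t| ≤ M) (hc : 0 < c)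
    {a : ℝ} (ha : 0 < a) : IntegrableOn (stableKernel p c x) (Set.Ioi a) := by
  refine ((integrableOn_Ioi_rpow_of_lt (by linarith : -1 - c < -1) ha).const_mul
    (|x| * M)).mono' (((continuousOn_stableKernel hp_cont).mono
      (Set.Ioi_subset_Ioi ha.le)).aestronglyMeasurable measurableSet_Ioi) ?_
  filter_upwards [ae_restrict_mem measurableSet_Ioi] with s (hs : a < s)
  exact abs_stableKernel_le hp (by linarith)

lemma abs_integral_stableKernel_Ioi_le (hp : ∀ t, |p t| ≤ M) (hc : 0 < c) {a : ℝ}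
    (ha : 0 < a) : |∫ s in Set.Ioi a, stableKernel p c x s| ≤ |x| * M / c * a ^ (-c) := by
  have hbound : ∫ s in Set.Ioi a, |x| * M * s ^ (-1 - c) = |x| * M / c * a ^ (-c) := by
    rw [integral_const_mul, integral_Ioi_rpow_of_lt (by linarith) ha,
      show -1 - c + 1 = -c by ring, neg_div, div_neg, neg_neg]
    ring
  rw [← hbound, ← Real.norm_eq_abs]
  refine norm_integral_le_of_norm_le
    ((integrableOn_Ioi_rpow_of_lt (by linarith : -1 - c < -1) ha).const_mul _) ?_
  filter_upwards [ae_restrict_mem measurableSet_Ioi] with s (hs : a < s)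
  exact abs_stableKernel_le hp (by linarith)

lemma abs_mul_mul_sub_mul_mul_le {L : NNReal} (hp : ∀ t, |p t| ≤ M) (hlip : LipschitzWith L p)
    (u v u' v' : ℝ) :
    |x * u * p (-x * v) - x * u' * p (-x * v')|
      ≤ |x| * (M * |u - u'| + |u'| * (L * (|x| * |v - v'|))) := by
  have hlip' : |p (-x * v) - p (-x * v')| ≤ L * (|x| * |v - v'|) := by
    have := hlip.dist_le_mul (-x * v) (-x * v')
    rwa [Real.dist_eq, Real.dist_eq, show -x * v - -x * v' = -x * (v - v') by ring, abs_mul,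
      abs_neg] at this
  calc |x * u * p (-x * v) - x * u' * p (-x * v')|
      = |x * ((u - u') * p (-x * v)) + x * (u' * (p (-x * v) - p (-x * v')))| := by ring_nf
    _ ≤ |x| * (|u - u'| * |p (-x * v)|) + |x| * (|u'| * |p (-x * v) - p (-x * v')|) :=
        (abs_add_le _ _).trans_eq (by simp only [abs_mul])
    _ ≤ |x| * (M * |u - u'| + |u'| * (L * (|x| * |v - v'|))) := by
        rw [← mul_add, mul_comm M]
        gcongr
        exact hp _

lemma abs_mul_sub_integral_stableKernel_le {L : NNReal} (hp : ∀ t, |p t| ≤ M)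
    (hlip : LipschitzWith L p) (hc : 0 ≤ c) {a δ e u v : ℝ} (ha : 1 ≤ a) (hδ : 0 ≤ δ)
    (hu : |u - a ^ (-1 - c)| ≤ e) (hv : |v - a ^ (-c)| ≤ e) :
    |δ * (x * u * p (-x * v)) - ∫ s in a..a + δ, stableKernel p c x s|
      ≤ δ * (|x| * (M * (e + (1 + c) * δ) + L * (|x| * (e + c * δ)))) := by
  have hconst : δ * (x * u * p (-x * v)) = ∫ _ in a..a + δ, x * u * p (-x * v) := by
    rw [intervalIntegral.integral_const, add_sub_cancel_left, smul_eq_mul]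
  rw [hconst, ← intervalIntegral.integral_sub intervalIntegrable_const
    (intervalIntegrable_stableKernel hlip.continuous (by linarith) (by linarith)),
    ← Real.norm_eq_abs]
  refine (intervalIntegral.norm_integral_le_of_norm_le_const
    (C := |x| * (M * (e + (1 + c) * δ) + L * (|x| * (e + c * δ)))) fun s hs => ?_).trans_eq
    (by rw [add_sub_cancel_left, abs_of_nonneg hδ, mul_comm])
  rw [Set.uIoc_of_le (by linarith)] at hs
  have hs1 : 1 ≤ s := by linarith [hs.1]
  have hsa : |a - s| ≤ δ := by rw [abs_le]; constructor <;> linarith [hs.1, hs.2]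
  have hu' : |u - s ^ (-1 - c)| ≤ e + (1 + c) * δ := by
    have := abs_rpow_neg_sub_rpow_neg_le (by linarith : 0 ≤ 1 + c) ha hs1
    rw [show -(1 + c) = -1 - c by ring] at this
    calc |u - s ^ (-1 - c)| ≤ |u - a ^ (-1 - c)| + |a ^ (-1 - c) - s ^ (-1 - c)| :=
          abs_sub_le _ _ _
      _ ≤ e + (1 + c) * δ := by gcongr; exact this.trans (by gcongr)
  have hv' : |v - s ^ (-c)| ≤ e + c * δ := by
    calc |v - s ^ (-c)| ≤ |v - a ^ (-c)| + |a ^ (-c) - s ^ (-c)| := abs_sub_le _ _ _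
      _ ≤ e + c * δ := by
          gcongr; exact (abs_rpow_neg_sub_rpow_neg_le hc ha hs1).trans (by gcongr)
  have hs_pow : |s ^ (-1 - c)| ≤ 1 := by
    rw [abs_of_nonneg (Real.rpow_nonneg (by linarith) _)]
    exact Real.rpow_le_one_of_one_le_of_nonpos hs1 (by linarith)
  have hM : 0 ≤ M := (abs_nonneg _).trans (hp 0)
  rw [Real.norm_eq_abs]
  refine (abs_mul_mul_sub_mul_mul_le hp hlip _ _ _ _).trans ?_
  calc |x| * (M * |u - s ^ (-1 - c)| + |s ^ (-1 - c)| * (L * (|x| * |v - s ^ (-c)|)))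
      ≤ |x| * (M * (e + (1 + c) * δ) + 1 * (L * (|x| * (e + c * δ)))) := by gcongr
    _ = |x| * (M * (e + (1 + c) * δ) + L * (|x| * (e + c * δ))) := by rw [one_mul]

end Kernel

/-! ### Regularly varying normalisations -/

/-- Regular variation of index `c`, tested only along integer multiples. -/
def RatioTendstoRpow (B : ℕ → ℝ) (c : ℝ) : Prop :=
  ∀ a b : ℕ, 0 < a → 0 < b →
    Tendsto (fun m => B (a * m) / B (b * m)) atTop (𝓝 (((a : ℝ) / b) ^ c))

lemma SlowlyVarying.ratioTendstoRpow {h : ℝ → ℝ} (hslow : SlowlyVarying h) {B : ℕ → ℝ}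
    {c : ℝ} (hB : ∀ n : ℕ, B n = h n * (n : ℝ) ^ c) : RatioTendstoRpow B c := by
  intro a b ha hb
  have ha' : (0 : ℝ) < a := by exact_mod_cast ha
  have hb' : (0 : ℝ) < b := by exact_mod_cast hb
  have hbm : Tendsto (fun m : ℕ => ((b * m : ℕ) : ℝ)) atTop atTop :=
    tendsto_natCast_atTop_atTop.comp
      (tendsto_id.atTop_mul_const' hb |>.congr fun m => mul_comm _ _)
  have hh := ((hslow.2 _ (div_pos ha' hb')).comp hbm).mul_const (((a : ℝ) / b) ^ c)
  rw [one_mul] at hh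
  refine hh.congr' ?_
  filter_upwards [eventually_gt_atTop 0] with m hm
  have hm' : (0 : ℝ) < m := by exact_mod_cast hm
  have hcast : (a : ℝ) / b * ((b * m : ℕ) : ℝ) = ((a * m : ℕ) : ℝ) := by
    push_cast; field_simp
  have hpow : ((a * m : ℕ) : ℝ) ^ c / ((b * m : ℕ) : ℝ) ^ c = ((a : ℝ) / b) ^ c := by
    rw [← Real.div_rpow (by positivity) (by positivity)]
    push_cast
    rw [mul_div_mul_right _ _ hm'.ne']
  simp only [Function.comp_apply, hcast, hB, mul_div_mul_comm, hpow]

lemma rpow_div_mul_le_of_doubling {B : ℕ → ℝ} (hBmono : Monotone B) {γ : ℝ} (hγ : 0 ≤ γ)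
    {n k : ℕ} (hn : 0 < n) (hBn : 0 ≤ B n) (hdouble : ∀ m, n ≤ m → 2 ^ γ * B m ≤ B (2 * m))
    (hnk : n ≤ k) : ((k : ℝ) / n) ^ γ * B n ≤ 2 ^ γ * B k := by
  have hiter : ∀ i : ℕ, ((2 : ℝ) ^ γ) ^ i * B n ≤ B (2 ^ i * n) := by
    intro i
    induction i with
    | zero => simp
    | succ i ih =>
      calc ((2 : ℝ) ^ γ) ^ (i + 1) * B n = 2 ^ γ * (((2 : ℝ) ^ γ) ^ i * B n) := by ring
        _ ≤ 2 ^ γ * B (2 ^ i * n) := by gcongr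
        _ ≤ B (2 * (2 ^ i * n)) := hdouble _ (Nat.le_mul_of_pos_left n (by positivity))
        _ = B (2 ^ (i + 1) * n) := by ring_nf
  set i := Nat.log 2 (k / n)
  have hlow : 2 ^ i * n ≤ k :=
    (Nat.le_div_iff_mul_le hn).mp (Nat.pow_log_le_self 2 ((Nat.div_pos hnk hn).ne'))
  have hhigh : k < 2 ^ (i + 1) * n :=
    (Nat.div_lt_iff_lt_mul hn).mp (Nat.lt_pow_succ_log_self (by norm_num) _)
  have hratio : ((k : ℝ) / n) ^ γ ≤ 2 ^ γ * ((2 : ℝ) ^ γ) ^ i := by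
    rw [← pow_succ', Real.rpow_pow_comm zero_le_two]
    gcongr
    rw [div_le_iff₀ (by exact_mod_cast hn)]
    exact_mod_cast hhigh.le
  calc ((k : ℝ) / n) ^ γ * B n ≤ 2 ^ γ * (((2 : ℝ) ^ γ) ^ i * B n) := by
        rw [← mul_assoc]; gcongr
    _ ≤ 2 ^ γ * B k := by gcongr; exact (hiter i).trans (hBmono hlow)

/-- A Potter bound. -/
lemma RatioTendstoRpow.eventually_rpow_div_mul_le {B : ℕ → ℝ} {c : ℝ}
    (hB : RatioTendstoRpow B c) (hBmono : Monotone B) (hBpos : ∀ n : ℕ, 1 ≤ n → 0 < B n)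
    {γ : ℝ} (hγ : 0 ≤ γ) (hγc : γ < c) :
    ∀ᶠ n in atTop, ∀ k : ℕ, n ≤ k → ((k : ℝ) / n) ^ γ * B n ≤ 2 ^ γ * B k := by
  have hlim := hB 2 1 two_pos one_pos
  simp only [one_mul, Nat.cast_ofNat, Nat.cast_one, div_one] at hlim
  obtain ⟨N, hN⟩ := eventually_atTop.mp <|
    (hlim.eventually (lt_mem_nhds (Real.rpow_lt_rpow_of_exponent_lt one_lt_two hγc))).and
      (eventually_ge_atTop 1)
  have hdouble : ∀ m, N ≤ m → 2 ^ γ * B m ≤ B (2 * m) := fun m hm =>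
    ((lt_div_iff₀ (hBpos m (hN m hm).2)).mp (hN m hm).1).le
  filter_upwards [eventually_ge_atTop (max N 1)] with n hn k hnk
  exact rpow_div_mul_le_of_doubling hBmono hγ (by omega) (hBpos n (by omega)).le
    (fun m hm => hdouble m (by omega)) hnk

lemma abs_div_sub_rpow_le_of_grid {B : ℕ → ℝ} (hBmono : Monotone B)
    (hBpos : ∀ n : ℕ, 1 ≤ n → 0 < B n) {c ε : ℝ} (hc0 : 0 ≤ c) (hc1 : c ≤ 1)
    {q m p n k : ℕ} (hq : 1 ≤ q) (hm : 1 ≤ m) (hqp : q ≤ p)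
    (hqm_n : q * m ≤ n) (hn_qm : n ≤ (q + 1) * m) (hpm_k : p * m ≤ k)
    (hk_pm : k ≤ (p + 1) * m) (hgap : (2 / (q : ℝ)) ^ c ≤ ε / 2)
    (hup : B ((q + 1) * m) / B (p * m) ≤ (((q : ℝ) + 1) / p) ^ c + ε / 2)
    (hlow : ((q : ℝ) / (p + 1)) ^ c - ε / 2 ≤ B (q * m) / B ((p + 1) * m)) :
    |B n / B k - ((n : ℝ) / k) ^ c| ≤ ε := by
  have hp : 1 ≤ p := hq.trans hqp
  have hpos : ∀ a : ℕ, 1 ≤ a → 0 < B (a * m) := fun a ha =>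
    hBpos _ (Nat.one_le_iff_ne_zero.mpr (Nat.mul_ne_zero (by omega) (by omega)))
  have hk : 0 < B k := hBpos k ((Nat.mul_le_mul hp hm).trans hpm_k)
  have hn : 0 < B n := hBpos n ((Nat.mul_le_mul hq hm).trans hqm_n)
  have hB_up : B n / B k ≤ B ((q + 1) * m) / B (p * m) :=
    div_le_div₀ (hpos _ (by omega)).le (hBmono hn_qm) (hpos p hp) (hBmono hpm_k)
  have hB_low : B (q * m) / B ((p + 1) * m) ≤ B n / B k :=
    div_le_div₀ hn.le (hBmono hqm_n) hk (hBmono hk_pm)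
  have hm' : (0 : ℝ) < m := by exact_mod_cast hm
  have hnk_up : ((n : ℝ) / k) ^ c ≤ (((q : ℝ) + 1) / p) ^ c := by
    refine Real.rpow_le_rpow (by positivity) ?_ hc0
    calc (n : ℝ) / k ≤ ((q + 1) * m : ℕ) / (p * m : ℕ) :=
          div_le_div₀ (by positivity) (by exact_mod_cast hn_qm)
            (by exact_mod_cast Nat.mul_pos hp hm) (by exact_mod_cast hpm_k)
      _ = ((q : ℝ) + 1) / p := by push_cast; rw [mul_div_mul_right _ _ hm'.ne']
  have hnk_low : ((q : ℝ) / (p + 1)) ^ c ≤ ((n : ℝ) / k) ^ c := by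
    refine Real.rpow_le_rpow (by positivity) ?_ hc0
    calc (q : ℝ) / (p + 1) = (q * m : ℕ) / ((p + 1) * m : ℕ) := by
          push_cast; rw [mul_div_mul_right _ _ hm'.ne']
      _ ≤ (n : ℝ) / k :=
          div_le_div₀ (by positivity) (by exact_mod_cast hqm_n)
            (by exact_mod_cast (Nat.mul_le_mul hp hm).trans hpm_k) (by exact_mod_cast hk_pm)
  have hspread := rpow_div_sub_rpow_div_le hc0 hc1 (by exact_mod_cast hq : (1 : ℝ) ≤ q)
    (by exact_mod_cast hqp : (q : ℝ) ≤ p)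
  rw [abs_le]
  constructor <;> linarith

lemma RatioTendstoRpow.eventually_abs_div_sub_rpow_le {B : ℕ → ℝ} {c : ℝ}
    (hB : RatioTendstoRpow B c) (hBmono : Monotone B) (hBpos : ∀ n : ℕ, 1 ≤ n → 0 < B n)
    (hc0 : 0 < c) (hc1 : c ≤ 1) (K : ℕ) {ε : ℝ} (hε : 0 < ε) :
    ∀ᶠ n in atTop, ∀ k : ℕ, n ≤ k → k < K * n → |B n / B k - ((n : ℝ) / k) ^ c| ≤ ε := by
  obtain ⟨q, hgap, hq⟩ : ∃ q : ℕ, (2 / (q : ℝ)) ^ c ≤ ε / 2 ∧ 1 ≤ q := by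
    have hlim : Tendsto (fun q : ℕ => (2 / (q : ℝ)) ^ c) atTop (𝓝 0) := by
      simpa [Function.comp_def, Real.zero_rpow hc0.ne'] using
        ((Real.continuous_rpow_const hc0.le).tendsto 0).comp
          (tendsto_const_div_atTop_nhds_zero_nat (2 : ℝ))
    exact ((hlim.eventually (ge_mem_nhds (half_pos hε))).and (eventually_ge_atTop 1)).exists
  have hgrid : ∀ᶠ m in atTop, ∀ p ∈ Finset.Icc q (K * (q + 1)),
      B ((q + 1) * m) / B (p * m) ≤ (((q : ℝ) + 1) / p) ^ c + ε / 2 ∧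
      ((q : ℝ) / (p + 1)) ^ c - ε / 2 ≤ B (q * m) / B ((p + 1) * m) := by
    rw [Finset.eventually_all]
    intro p hp
    have hp1 : 1 ≤ p := hq.trans (Finset.mem_Icc.mp hp).1
    have hup := hB (q + 1) p (by omega) hp1
    have hlow := hB q (p + 1) hq (by omega)
    push_cast at hup hlow
    exact (hup.eventually (ge_mem_nhds (lt_add_of_pos_right _ (half_pos hε)))).and
      (hlow.eventually (le_mem_nhds (sub_lt_self _ (half_pos hε))))
  filter_upwards [(Nat.tendsto_div_const_atTop (by omega : q ≠ 0)).eventually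
    (hgrid.and (eventually_ge_atTop q))] with n ⟨hgrid_n, hqm⟩ k hnk hkK
  set m := n / q
  set p := k / m
  have hm : 1 ≤ m := hq.trans hqm
  have hqm_n : q * m ≤ n := Nat.mul_div_le n q
  have hn_qm : n ≤ (q + 1) * m := by
    have : n < q * (m + 1) := Nat.lt_mul_div_succ n (by omega)
    nlinarith
  have hpm_k : p * m ≤ k := Nat.div_mul_le_self k m
  have hk_pm : k ≤ (p + 1) * m := by
    have : k < p * m + m := Nat.lt_div_mul_add (by omega)
    nlinarith
  have hqp : q ≤ p := (Nat.le_div_iff_mul_le (by omega)).mpr (by nlinarith)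
  have hpK : p ≤ K * (q + 1) := by
    by_contra! h
    nlinarith [Nat.mul_le_mul_right m h]
  obtain ⟨hup, hlow⟩ := hgrid_n p (Finset.mem_Icc.mpr ⟨hqp, hpK⟩)
  exact abs_div_sub_rpow_le_of_grid hBmono hBpos hc0.le hc1 hq hm hqp hqm_n hn_qm hpm_k hk_pm
    hgap hup hlow

/-! ### The series against the integral -/

lemma abs_div_mul_le_of_rpow_div_mul_le {p : ℝ → ℝ} {M : ℝ} (hp : ∀ t, |p t| ≤ M)
    {B : ℕ → ℝ} {α γ y : ℝ} {n k : ℕ} (hn : 1 ≤ n) (hnk : n ≤ k) (hBn : 0 < B n)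
    (hy0 : 0 ≤ y) (hy : y ≤ α * B n) (hpotter : ((k : ℝ) / n) ^ γ * B n ≤ 2 ^ γ * B k) :
    |y / (k * B k) * p (-y / B k)| ≤ α * M * 2 ^ γ * (n : ℝ) ^ γ * (k : ℝ) ^ (-1 - γ) := by
  have hn' : (0 : ℝ) < n := by exact_mod_cast hn
  have hk' : (0 : ℝ) < k := by exact_mod_cast hn.trans hnk
  have hkn : (0 : ℝ) < ((k : ℝ) / n) ^ γ := by positivity
  have hBk : 0 < B k := pos_of_mul_pos_right ((mul_pos hkn hBn).trans_le hpotter) (by positivity)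
  have hratio : B n ≤ 2 ^ γ * ((n : ℝ) / k) ^ γ * B k := by
    rw [← le_div_iff₀' hkn] at hpotter
    rwa [div_eq_mul_inv, ← Real.inv_rpow (by positivity), inv_div, mul_right_comm] at hpotter
  have hpow : ((n : ℝ) / k) ^ γ / k = (n : ℝ) ^ γ * (k : ℝ) ^ (-1 - γ) := by
    rw [Real.div_rpow hn'.le hk'.le, show -1 - γ = -γ - 1 by ring, Real.rpow_sub_one hk'.ne',
      Real.rpow_neg hk'.le]
    ring
  have hM : 0 ≤ M := (abs_nonneg _).trans (hp 0)
  have hα : 0 ≤ α := nonneg_of_mul_nonneg_left (hy0.trans hy) hBn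
  have hkBk : 0 < (k : ℝ) * B k := mul_pos hk' hBk
  calc |y / (k * B k) * p (-y / B k)| ≤ α * B n / (k * B k) * M := by
        rw [abs_mul, abs_of_nonneg (div_nonneg hy0 hkBk.le)]
        exact mul_le_mul (by gcongr) (hp _) (abs_nonneg _)
          (div_nonneg (mul_nonneg hα hBn.le) hkBk.le)
    _ ≤ α * (2 ^ γ * ((n : ℝ) / k) ^ γ * B k) / (k * B k) * M := by gcongr
    _ = α * M * 2 ^ γ * (((n : ℝ) / k) ^ γ / k) := by field_simp
    _ = α * M * 2 ^ γ * (n : ℝ) ^ γ * (k : ℝ) ^ (-1 - γ) := by rw [hpow]; ring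

lemma abs_div_mul_sub_integral_stableKernel_le {p : ℝ → ℝ} {M c : ℝ} {L : NNReal}
    (hp : ∀ t, |p t| ≤ M) (hlip : LipschitzWith L p) (hc0 : 0 ≤ c) (hc1 : c ≤ 1)
    {B : ℕ → ℝ} {α ε y : ℝ} {n k : ℕ} (hn : 1 ≤ n) (hnk : n ≤ k) (hBn : 0 < B n)
    (hBk : 0 < B k) (hy0 : 0 ≤ y) (hy : y ≤ α * B n)
    (hratio : |B n / B k - ((n : ℝ) / k) ^ c| ≤ ε) :
    |y / (k * B k) * p (-y / B k)
        - ∫ s in (k / n : ℝ)..k / n + 1 / n, stableKernel p c (y / B n) s|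
      ≤ 1 / n * (α * (M + L * α) * (ε + 2 / n)) := by
  have hn' : (0 : ℝ) < n := by exact_mod_cast hn
  have hk' : (0 : ℝ) < k := by exact_mod_cast hn.trans hnk
  have hnk' : (n : ℝ) / k ≤ 1 := (div_le_one hk').mpr (by exact_mod_cast hnk)
  have hx0 : 0 ≤ y / B n := by positivity
  have hxα : y / B n ≤ α := (div_le_iff₀ hBn).mpr hy
  have hterm : y / (k * B k) * p (-y / B k) = 1 / n *
      (y / B n * ((n / k) * (B n / B k)) * p (-(y / B n) * (B n / B k))) := by
    field_simp
  have hu : |(n / k) * (B n / B k) - ((k : ℝ) / n) ^ (-1 - c)| ≤ ε := by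
    rw [show -1 - c = -(1 + c) by ring, Real.rpow_neg_eq_inv_rpow, inv_div,
      Real.rpow_add (by positivity), Real.rpow_one, ← mul_sub, abs_mul,
      abs_of_nonneg (by positivity)]
    exact (mul_le_of_le_one_left (abs_nonneg _) hnk').trans hratio
  have hv : |B n / B k - ((k : ℝ) / n) ^ (-c)| ≤ ε := by
    rwa [Real.rpow_neg_eq_inv_rpow, inv_div]
  rw [hterm]
  refine (abs_mul_sub_integral_stableKernel_le hp hlip hc0
    ((one_le_div hn').mpr (by exact_mod_cast hnk)) (by positivity) hu hv).trans ?_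
  have hM : 0 ≤ M := (abs_nonneg _).trans (hp 0)
  have h1 : (1 + c) * (1 / n) ≤ 2 / n := by
    rw [mul_one_div]; gcongr; linarith
  have h2 : c * (1 / n) ≤ 2 / n := by
    rw [mul_one_div]; gcongr; linarith
  have hε : 0 ≤ ε := (abs_nonneg _).trans hratio
  have hα : 0 ≤ α := hx0.trans hxα
  calc 1 / n * (|y / B n| * (M * (ε + (1 + c) * (1 / n))
        + L * (|y / B n| * (ε + c * (1 / n)))))
      ≤ 1 / n * (α * (M * (ε + 2 / n) + L * (α * (ε + 2 / n)))) := by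
        rw [abs_of_nonneg hx0]; gcongr
    _ = 1 / n * (α * (M + L * α) * (ε + 2 / n)) := by ring

lemma RatioTendstoRpow.eventually_abs_sum_sub_integral_le {p : ℝ → ℝ} {M c : ℝ} {L : NNReal}
    (hp : ∀ t, |p t| ≤ M) (hlip : LipschitzWith L p) {B : ℕ → ℝ} (hB : RatioTendstoRpow B c)
    (hBmono : Monotone B) (hBpos : ∀ n : ℕ, 1 ≤ n → 0 < B n) (hc0 : 0 < c) (hc1 : c ≤ 1)
    {α : ℝ} (hα : 0 ≤ α) (K : ℕ) {η : ℝ} (hη : 0 < η) :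
    ∀ᶠ n in atTop, ∀ y, 0 ≤ y → y ≤ α * B n →
      |∑ i ∈ Finset.range (K * n), y / ((n + i : ℕ) * B (n + i)) * p (-y / B (n + i))
        - ∫ s in (1 : ℝ)..1 + K, stableKernel p c (y / B n) s| ≤ η := by
  have hM : 0 ≤ M := (abs_nonneg _).trans (hp 0)
  set D := α * (M + L * α)
  have hD : 0 ≤ D := by positivity
  obtain ⟨ε, hε, hKε⟩ : ∃ ε > 0, K * D * (2 * ε) ≤ η := by
    refine ⟨η / (2 * (K * D + 1)), by positivity, ?_⟩
    rw [show K * D * (2 * (η / (2 * (K * D + 1)))) = η * (K * D / (K * D + 1)) by field_simp]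
    exact mul_le_of_le_one_right hη.le ((div_le_one (by positivity)).mpr (by linarith))
  filter_upwards [hB.eventually_abs_div_sub_rpow_le hBmono hBpos hc0 hc1 (K + 1) hε,
    (tendsto_const_div_atTop_nhds_zero_nat (2 : ℝ)).eventually (ge_mem_nhds hε),
    eventually_ge_atTop 1] with n hratio h2n hn y hy0 hy
  have hn' : (0 : ℝ) < n := by exact_mod_cast hn
  have hmesh := abs_sum_sub_integral_le_of_cells (g := stableKernel p c (y / B n))
    (F := fun i => y / ((n + i : ℕ) * B (n + i)) * p (-y / B (n + i))) (a := 1) (δ := 1 / n)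
    (N := K * n) (E := 1 / n * (D * (ε + 2 / n)))
    (fun i _ => intervalIntegrable_stableKernel hlip.continuous (by positivity) (by positivity))
    (fun i hi => by
      have hcell : (1 : ℝ) + i * (1 / n) = ((n + i : ℕ) : ℝ) / n := by push_cast; field_simp
      rw [hcell]
      exact abs_div_mul_sub_integral_stableKernel_le hp hlip hc0.le hc1 hn
        (Nat.le_add_right n i) (hBpos n hn) (hBpos _ (by omega)) hy0 hy
        (hratio _ (Nat.le_add_right n i) (by nlinarith)))
  rw [show (1 : ℝ) + (K * n : ℕ) * (1 / n) = 1 + K by push_cast; field_simp] at hmesh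
  refine hmesh.trans ?_
  calc ((K * n : ℕ) : ℝ) * (1 / n * (D * (ε + 2 / n))) = K * D * (ε + 2 / n) := by
        push_cast; field_simp
    _ ≤ K * D * (2 * ε) := by gcongr; linarith
    _ ≤ η := hKε

theorem RatioTendstoRpow.eventually_abs_tsum_sub_integral_stableKernel_lt {p : ℝ → ℝ}
    {M c : ℝ} {L : NNReal} (hp : ∀ t, |p t| ≤ M) (hlip : LipschitzWith L p) {B : ℕ → ℝ}
    (hB : RatioTendstoRpow B c) (hBmono : Monotone B) (hBpos : ∀ n : ℕ, 1 ≤ n → 0 < B n)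
    (hc0 : 0 < c) (hc1 : c ≤ 1) {α : ℝ} (hα : 0 ≤ α) {η : ℝ} (hη : 0 < η) :
    ∀ᶠ n in atTop, ∀ y, 0 ≤ y → y ≤ α * B n →
      |∑' i : ℕ, y / ((n + i : ℕ) * B (n + i)) * p (-y / B (n + i))
        - ∫ s in Set.Ioi 1, stableKernel p c (y / B n) s| < η := by
  set γ := c / 2
  have hγ : 0 < γ := by positivity
  have hM : 0 ≤ M := (abs_nonneg _).trans (hp 0)
  have hdecay : ∀ r : ℝ, 0 < r → ∀ A : ℝ, ∀ᶠ K : ℕ in atTop, A * ((1 : ℝ) + K) ^ (-r) < η / 3 :=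
    fun r hr A => by
      have := ((tendsto_rpow_neg_atTop hr).comp (tendsto_atTop_add_const_left _ 1
        tendsto_natCast_atTop_atTop)).const_mul A
      rw [mul_zero] at this
      exact this.eventually (gt_mem_nhds (by positivity))
  obtain ⟨K, hKseries, hKintegral⟩ :=
    ((hdecay γ hγ (α * M * 2 ^ γ * (1 + 1 / γ))).and (hdecay c hc0 (α * M / c))).exists
  filter_upwards [hB.eventually_abs_sum_sub_integral_le hp hlip hBmono hBpos hc0 hc1 hα K
      (by positivity : 0 < η / 3),
    hB.eventually_rpow_div_mul_le hBmono hBpos hγ.le (half_lt_self hc0), eventually_ge_atTop 1]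
    with n hmiddle hpotter hn y hy0 hy
  have hBn := hBpos n hn
  have hx : |y / B n| ≤ α := by
    rw [abs_of_nonneg (by positivity)]; exact (div_le_iff₀ hBn).mpr hy
  have hterm : ∀ k, n ≤ k → |y / (k * B k) * p (-y / B k)|
      ≤ α * M * 2 ^ γ * (n : ℝ) ^ γ * (k : ℝ) ^ (-1 - γ) := fun k hk =>
    abs_div_mul_le_of_rpow_div_mul_le hp hn hk hBn hy0 hy (hpotter k hk)
  have hseries_tail := abs_tsum_mul_add_le_of_abs_le_rpow hγ hn (m := 1 + K) (by omega) hterm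
  simp only [show ∀ i, (1 + K) * n + i = n + (i + K * n) by intro i; ring] at hseries_tail
  rw [show ((1 + K : ℕ) : ℝ) = 1 + K by push_cast; ring] at hseries_tail
  have hintegral_tail : |∫ s in Set.Ioi (1 + K : ℝ), stableKernel p c (y / B n) s|
      ≤ α * M / c * ((1 : ℝ) + K) ^ (-c) :=
    (abs_integral_stableKernel_Ioi_le hp hc0 (by positivity)).trans (by gcongr)
  have hsplit := abs_tsum_sub_integral_Ioi_le
    (summable_nat_add_of_abs_le_rpow hγ hterm) (le_add_of_nonneg_right K.cast_nonneg)
    (integrableOn_stableKernel_Ioi (x := y / B n) hlip.continuous hp hc0 one_pos) (K * n)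
  linarith [hmiddle y hy0 hy]

theorem stmt19_general (θ : ℝ) (hθ1 : 1 < θ)
    (p1 : ℝ → ℝ) (hnonneg : ∀ x, 0 ≤ p1 x)
    (M : ℝ) (hbdd : ∀ x, p1 x ≤ M)
    (hdiff : Differentiable ℝ p1) (M' : ℝ) (hderiv : ∀ x, |deriv p1 x| ≤ M')
    (h : ℝ → ℝ) (hslow : SlowlyVarying h)
    (B : ℕ → ℝ) (hB : ∀ n : ℕ, B n = h n * (n : ℝ) ^ (1 / θ))
    (hBpos : ∀ n : ℕ, 1 ≤ n → 0 < B n) (hBmono : Monotone B)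
    (q : ℝ → ℝ → ℝ)
    (hq : ∀ s x : ℝ, q s x = x * s ^ (-(1 : ℝ) - 1 / θ) * p1 (-x * s ^ (-(1 / θ))))
    (α : ℝ) (hα : 0 < α) :
    ∀ η : ℝ, 0 < η → ∃ N : ℕ, ∀ n : ℕ, N ≤ n → ∀ j : ℕ, 1 ≤ j →
      (j : ℝ) ≤ α * B n →
      |(∑' k : {k : ℕ // n ≤ k}, ((j : ℝ) / ((k.1 : ℝ) * B k.1)) * p1 (-(j : ℝ) / B k.1))
          - ∫ s in Set.Ioi (1 : ℝ), q s ((j : ℝ) / B n)| < η := by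
  intro η hη
  obtain rfl : q = fun s x => stableKernel p1 (1 / θ) x s := funext₂ hq
  have hp : ∀ t, |p1 t| ≤ M := fun t => abs_le.mpr ⟨by linarith [hnonneg t, hbdd t], hbdd t⟩
  have hlip : LipschitzWith M'.toNNReal p1 :=
    lipschitzWith_of_nnnorm_deriv_le hdiff fun t =>
      (Real.le_toNNReal_iff_coe_le ((abs_nonneg _).trans (hderiv 0))).mpr (hderiv t)
  have hc1 : 1 / θ ≤ 1 := (div_le_one (by linarith)).mpr hθ1.le
  obtain ⟨N, hN⟩ := eventually_atTop.mp <|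
    (hslow.ratioTendstoRpow hB).eventually_abs_tsum_sub_integral_stableKernel_lt hp hlip hBmono
      hBpos (by positivity) hc1 hα.le hη
  refine ⟨N, fun n hn j _ hj => ?_⟩
  rw [tsum_subtype_le_eq_tsum_add (fun k => (j : ℝ) / (k * B k) * p1 (-(j : ℝ) / B k))]
  exact hN n hn j j.cast_nonneg hj

/-- Uniform comparison of the series with the integral: for θ ∈ (1,2], p_1 a
bounded continuous nonnegative density with bounded derivative,
q_s(x) = x s^{−1−1/θ} p_1(−x s^{−1/θ}), and B_n = h(n)n^{1/θ} with h slowly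
varying, for every α > 0,
sup_{1 ≤ j ≤ αB_n} |∑_{k=n}^∞ (j/(k B_k)) p_1(−j/B_k) − ∫_1^∞ q_s(j/B_n) ds| → 0. -/
theorem stmt19 (θ : ℝ) (hθ1 : 1 < θ) (hθ2 : θ ≤ 2)
    (p1 : ℝ → ℝ) (hcont : Continuous p1) (hnonneg : ∀ x, 0 ≤ p1 x)
    (M : ℝ) (hbdd : ∀ x, p1 x ≤ M)
    (hdiff : Differentiable ℝ p1) (M' : ℝ) (hderiv : ∀ x, |deriv p1 x| ≤ M')
    (h : ℝ → ℝ) (hhmeas : Measurable h) (hslow : SlowlyVarying h)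
    (B : ℕ → ℝ) (hB : ∀ n : ℕ, B n = h n * (n : ℝ) ^ (1 / θ))
    (hBpos : ∀ n : ℕ, 1 ≤ n → 0 < B n) (hBmono : Monotone B)
    (q : ℝ → ℝ → ℝ)
    (hq : ∀ s x : ℝ, q s x = x * s ^ (-(1 : ℝ) - 1 / θ) * p1 (-x * s ^ (-(1 / θ))))
    (α : ℝ) (hα : 0 < α) :
    ∀ η : ℝ, 0 < η → ∃ N : ℕ, ∀ n : ℕ, N ≤ n → ∀ j : ℕ, 1 ≤ j →
      (j : ℝ) ≤ α * B n →
      |(∑' k : {k : ℕ // n ≤ k}, ((j : ℝ) / ((k.1 : ℝ) * B k.1)) * p1 (-(j : ℝ) / B k.1))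
          - ∫ s in Set.Ioi (1 : ℝ), q s ((j : ℝ) / B n)| < η :=
  stmt19_general θ hθ1 p1 hnonneg M hbdd hdiff M' hderiv h hslow B hB hBpos hBmono q hq α hα
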